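/- Let S₀ and S be complex 2×2 symmetric unitary matrices and suppose conj(S₀)·S = diag(1, e^{iη}) for some η ∈ ℝ, where the off-diagonal entry T₀ of S₀ is nonzero. Then e^{iη} = 1 and S = S₀. -/
import Mathlib


theorem stmt_8 (R0p R0m T0 Rp Rm T : ℂ) (η : ℝ)
    (hU0 : (!![R0p, T0; T0, R0m]) * (!![R0p, T0; T0, R0m]).conjTranspose = 1)
    (hU : (!![Rp, T; T, Rm]) * (!![Rp, T; T, Rm]).conjTranspose = 1)
    (hT0 : T0 ≠ 0)
    (hM : (!![R0p, T0; T0, R0m]).map (starRingEnd ℂ) * (!![Rp, T; T, Rm]) =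
      !![1, 0; 0, Complex.exp (η * Complex.I)]) :
    Complex.exp (η * Complex.I) = 1 ∧ (!![Rp, T; T, Rm]) = (!![R0p, T0; T0, R0m]) := by
  set e := Complex.exp (η * Complex.I) with he
  set A := !![R0p, T0; T0, R0m] with hA
  set B := !![Rp, T; T, Rm] with hB
  have hAT : A.conjTranspose = A.map (starRingEnd ℂ) := by
    ext i j
    fin_cases i <;> fin_cases j <;>
      simp [hA, Matrix.conjTranspose_apply]
  have h1 : A * A.map (starRingEnd ℂ) = 1 := by rw [← hAT]; exact hU0
  have hBeq : B = A * !![1, 0; 0, e] := by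
    calc B = (A * A.map (starRingEnd ℂ)) * B := by rw [h1, one_mul]
    _ = A * (A.map (starRingEnd ℂ) * B) := by rw [Matrix.mul_assoc]
    _ = A * !![1, 0; 0, e] := by rw [hM]
  have hAD : A * !![1, 0; 0, e] = !![R0p, T0 * e; T0, R0m * e] := by
    ext i j
    fin_cases i <;> fin_cases j <;>
      simp [hA, Matrix.mul_apply, Fin.sum_univ_two]
  rw [hAD] at hBeq
  have h01 : T = T0 * e := by
    have := congrFun (congrFun hBeq 0) 1
    simpa [hB] using this
  have h10 : T = T0 := by
    have := congrFun (congrFun hBeq 1) 0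
    simpa [hB] using this
  have he1 : e = 1 := by
    have : T0 * e = T0 * 1 := by rw [← h01, mul_one, h10]
    exact mul_left_cancel₀ hT0 this
  refine ⟨he1, ?_⟩
  rw [hBeq, he1]
  simp [hA, mul_one]
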